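/- In the water filling algorithm with fixed order, the returned loads {q_c} satisfy Σ_c q_c ≥ q^in whenever min_c q_c⁻ ≤ q^in ≤ Σ_c q_c⁺: formally, if compressors c_1,…,c_m with 0 < q_i⁻ ≤ q_i⁺ are filled greedily to full capacity in order until the cumulative capacity exceeds q^in, and then trimmed back in reverse order (each active compressor reduced by at most q_i⁺ − q_i⁻, never below q_i⁻, and only while the running total exceeds q^in), the final total Σ q_i is at least q^in. -/

import Mathlib

/-- First loop of the water filling algorithm: fill compressors to full capacity
in order while the remaining needed load is positive. -/
noncomputable def fillPhase : List (ℝ × ℝ) → ℝ → List ℝ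
  | [], _ => []
  | (_, qM) :: rest, need =>
      if 0 < need then qM :: fillPhase rest (need - qM)
      else 0 :: fillPhase rest need

/-- Second loop of the water filling algorithm, run on the reversed list of
(compressor, assigned load) pairs: while there is surplus, trim each active
compressor back by at most `q⁺ − q⁻`. -/
noncomputable def trimPhase : List ((ℝ × ℝ) × ℝ) → ℝ → List ℝ
  | [], _ => []
  | pq :: rest, s =>
      if 0 ≤ s ∧ pq.2 ≠ 0 then
        (pq.2 - min (pq.1.2 - pq.1.1) s) ::
          trimPhase rest (s - min (pq.1.2 - pq.1.1) s)
      else pq.2 :: trimPhase rest s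

/-- The water filling algorithm (Algorithm 1): greedy fill in order, then trim
in reverse order. -/
noncomputable def waterFill (comps : List (ℝ × ℝ)) (qin : ℝ) : List ℝ :=
  let q1 := fillPhase comps qin
  (trimPhase ((comps.zip q1).reverse) (q1.sum - qin)).reverse

/-!
The fill phase stops only once the cumulative capacity reaches `q^in`, so it overshoots
`q^in` by a surplus `s ≥ 0`. The trim phase removes at most the current surplus at each
step and decreases the surplus by exactly what it removed, so in total it removes at most `s`.
-/

theorem length_fillPhase (l : List (ℝ × ℝ)) (need : ℝ) :
    (fillPhase l need).length = l.length := by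
  induction l generalizing need with
  | nil => rfl
  | cons a rest ih =>
    by_cases h : 0 < need <;> simp [fillPhase, h, ih]

theorem fillPhase_of_nonpos (l : List (ℝ × ℝ)) {need : ℝ} (h : need ≤ 0) :
    fillPhase l need = List.replicate l.length 0 := by
  induction l with
  | nil => rfl
  | cons a rest ih => simp [fillPhase, not_lt.mpr h, ih, List.replicate_succ]

theorem le_sum_fillPhase (l : List (ℝ × ℝ)) (need : ℝ)
    (h : need ≤ (l.map Prod.snd).sum) : need ≤ (fillPhase l need).sum := by
  induction l generalizing need with
  | nil => simpa [fillPhase] using h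
  | cons a rest ih =>
    by_cases hpos : 0 < need
    · rw [List.map_cons, List.sum_cons] at h
      have hrest := ih (need - a.2) (by linarith)
      rw [fillPhase, if_pos hpos, List.sum_cons]
      linarith
    · have hnonpos := not_lt.mp hpos
      simpa [fillPhase_of_nonpos _ hnonpos] using hnonpos

theorem sum_sub_le_sum_trimPhase (l : List ((ℝ × ℝ) × ℝ)) {s : ℝ} (hs : 0 ≤ s) :
    (l.map Prod.snd).sum - s ≤ (trimPhase l s).sum := by
  induction l generalizing s with
  | nil => simpa [trimPhase] using hs
  | cons pq rest ih =>
    by_cases h : 0 ≤ s ∧ pq.2 ≠ 0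
    · have hcut : min (pq.1.2 - pq.1.1) s ≤ s := min_le_right _ _
      have hrest := ih (s := s - min (pq.1.2 - pq.1.1) s) (by linarith)
      rw [trimPhase, if_pos h, List.map_cons, List.sum_cons, List.sum_cons]
      linarith
    · have hrest := ih hs
      rw [trimPhase, if_neg h, List.map_cons, List.sum_cons, List.sum_cons]
      linarith

theorem stmt_13_general (comps : List (ℝ × ℝ)) (qin : ℝ)
    (hhigh : qin ≤ (comps.map Prod.snd).sum) :
    qin ≤ (waterFill comps qin).sum := by
  set q1 := fillPhase comps qin
  have hfill : qin ≤ q1.sum := le_sum_fillPhase comps qin hhigh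
  have hloads : (comps.zip q1).map Prod.snd = q1 :=
    List.map_snd_zip (length_fillPhase comps qin).le
  have htrim := sum_sub_le_sum_trimPhase (comps.zip q1).reverse (sub_nonneg.mpr hfill)
  rw [List.map_reverse, List.sum_reverse, hloads] at htrim
  rw [waterFill, List.sum_reverse]
  linarith

/-- The water filling algorithm returns loads whose total is at least `q^in`,
whenever `min_i q_i⁻ ≤ q^in ≤ Σ_i q_i⁺`. -/
theorem stmt_13 (comps : List (ℝ × ℝ)) (qin : ℝ)
    (hcap : ∀ p ∈ comps, 0 < p.1 ∧ p.1 ≤ p.2)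
    (hlow : ∃ p ∈ comps, p.1 ≤ qin)
    (hhigh : qin ≤ (comps.map Prod.snd).sum) :
    qin ≤ (waterFill comps qin).sum :=
  stmt_13_general comps qin hhigh
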